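/- For all h ≥ 2 and k ≥ 2, every deterministic thrifty k-way branching program solving the Boolean binary tree evaluation problem BT_2^h(k) has at least k^h states; moreover, it has at least Σ_{l=2}^{h} k^l states. -/

import Mathlib

/-! ## Tree evaluation problems -/

/-- The `k`-valued input variables of the tree evaluation problem on the complete
`d`-ary tree with `h` levels: the single variable of a height-1 tree is its leaf
value; for a tree of height `h+2`, a variable is either an entry `f_root(args)`
of the root function's table, or a variable of one of the `d` principal subtrees. -/
inductive TEVar (d k : ℕ) : ℕ → Type where
  | leaf : TEVar d k 1
  | root {h : ℕ} (args : Fin d → Fin k) : TEVar d k (h + 2)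
  | child {h : ℕ} (j : Fin d) (x : TEVar d k (h + 1)) : TEVar d k (h + 2)

/-- The value of the root of the tree, computed bottom-up from an assignment of
values to all input variables. (For the degenerate height 0 it returns a junk value.) -/
def rootValue (d k : ℕ) (hk : 0 < k) : (h : ℕ) → (TEVar d k h → Fin k) → Fin k
  | 0, _ => ⟨0, hk⟩
  | 1, I => I .leaf
  | (h + 2), I => I (.root fun j => rootValue d k hk (h + 1) fun x => I (.child j x))

/-- The Boolean tree evaluation problem `BT_d^h(k)`: does the root have value 1
(represented by `(0 : Fin k)`)? -/
def BTfun (d k : ℕ) (hk : 0 < k) (h : ℕ) (I : TEVar d k h → Fin k) : Bool :=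
  decide (rootValue d k hk h I = ⟨0, hk⟩)

/-- `ThriftyVar d k hk h I v` holds iff querying variable `v` on input `I` is a
thrifty query: if `v` is an entry `f_i(args)` of the function table of an internal
node `i`, then `args` must be the tuple of correct values of the children of `i`. -/
def ThriftyVar (d k : ℕ) (hk : 0 < k) : (h : ℕ) → (TEVar d k h → Fin k) → TEVar d k h → Prop
  | 0, _, _ => True
  | 1, _, _ => True
  | (h + 2), I, .root args =>
      args = fun j => rootValue d k hk (h + 1) fun x => I (.child j x)
  | (h + 2), I, .child j x =>
      ThriftyVar d k hk (h + 1) (fun y => I (.child j y)) x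

/-! ## k-way branching programs -/

/-- A deterministic `k`-way branching program with input variables `V` (each taking
values in `[k] = Fin k`) and outputs in `R`. Each state is either a non-final state
labelled with the variable it queries (`Sum.inl v`), with `k` outedges given by
`next`, or a final state labelled with an output (`Sum.inr r`). -/
structure DBP (V : Type) (k : ℕ) (R : Type) where
  Q : Type
  fin : Fintype Q
  start : Q
  label : Q → V ⊕ R
  next : Q → Fin k → Q

namespace DBP

variable {V : Type} {k : ℕ} {R : Type}

/-- The size of a branching program is its number of states. -/
def size (B : DBP V k R) : ℕ := @Fintype.card B.Q B.fin

/-- One deterministic step on input `I` (final states are absorbing). -/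
def step (B : DBP V k R) (I : V → Fin k) (q : B.Q) : B.Q :=
  match B.label q with
  | .inl v => B.next q (I v)
  | .inr _ => q

/-- `B` computes the total function `f`: on every input, the computation reaches the
final state labelled with the correct output. -/
def Computes (B : DBP V k R) (f : (V → Fin k) → R) : Prop :=
  ∀ I : V → Fin k, ∃ t : ℕ, B.label ((B.step I)^[t] B.start) = .inr (f I)

end DBP

/-- A nondeterministic `k`-way branching program: as in `DBP`, but a non-final state
may have any number of outedges with any labels in `Fin k`, given by the edge
relation `edge q a q'`. -/
structure NBP (V : Type) (k : ℕ) (R : Type) where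
  Q : Type
  fin : Fintype Q
  start : Q
  label : Q → V ⊕ R
  edge : Q → Fin k → Q → Prop

namespace NBP

variable {V : Type} {k : ℕ} {R : Type}

/-- The size of a branching program is its number of states. -/
def size (B : NBP V k R) : ℕ := @Fintype.card B.Q B.fin

/-- One nondeterministic step on input `I`: follow an edge out of a non-final state
whose label matches the value of the queried variable. -/
def Step (B : NBP V k R) (I : V → Fin k) (q q' : B.Q) : Prop :=
  ∃ v, B.label q = .inl v ∧ B.edge q (I v) q'

/-- Some computation of `B` on input `I` ends in a final state labelled `r`. -/
def Outputs (B : NBP V k R) (I : V → Fin k) (r : R) : Prop :=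
  ∃ q, Relation.ReflTransGen (B.Step I) B.start q ∧ B.label q = .inr r

/-- `B` computes the total function `f`: on every input some computation ends in a
final state, and every computation ending in a final state ends in the one labelled
with the correct output. -/
def Computes (B : NBP V k R) (f : (V → Fin k) → R) : Prop :=
  ∀ (I : V → Fin k) (r : R), B.Outputs I r ↔ r = f I

end NBP

/-- A deterministic branching program for a tree evaluation problem is thrifty if on
every input, every query made during the computation is a thrifty query. -/
def DBPThrifty {R : Type} (d k h : ℕ) (hk : 0 < k) (B : DBP (TEVar d k h) k R) : Prop :=
  ∀ (I : TEVar d k h → Fin k) (t : ℕ) (v : TEVar d k h),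
    B.label ((B.step I)^[t] B.start) = .inl v → ThriftyVar d k hk h I v

/-- A nondeterministic branching program for a tree evaluation problem is thrifty if
for every input, every computation ending in a final state makes only thrifty
queries. -/
def NBPThrifty {R : Type} (d k h : ℕ) (hk : 0 < k) (B : NBP (TEVar d k h) k R) : Prop :=
  ∀ (I : TEVar d k h → Fin k) (n : ℕ) (path : ℕ → B.Q),
    path 0 = B.start →
    (∀ t < n, B.Step I (path t) (path (t + 1))) →
    (∃ r, B.label (path n) = .inr r) →
    ∀ t < n, ∀ v, B.label (path t) = .inl v → ThriftyVar d k hk h I v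


/-!
Fix a depth `L < h - 1`. On an input, establish the root at one of its queries, and every other
node at its last query before its parent is established. A thrifty program must query a node
before its parent (otherwise changing the entry holding the node's value would change the
arguments of the parent's query without changing the run up to it), so establishment times are
defined and strictly decrease going down the tree.

Let `p` be the depth-`L` node established last, at time `t`. Walking down from the sibling of
each node on the path to `p`, one meets a node established before `t` whose parent is established
at or after `t`: this node is not queried between `t` and the thrifty query to its parent, which
reveals its value. So the state at time `t`, together with the input outside the `L + 2` entries
holding the values of these pinned nodes and of the two children of `p`, determines the input:
run from that state, two such inputs read the same values, and the thrifty queries then force all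
node values to agree. Overwriting those entries arbitrarily gives `k ^ (L + 2)` times as many
pairs (state, input) as there are inputs, so at least `k ^ (L + 2)` states query depth-`L` nodes.
-/

open Function

theorem List.IsPrefix.exists_crossing {α : Type*} {P : List α → Prop} {x z : List α}
    (hxz : x <+: z) (hx : P x) (hz : ¬ P z) :
    ∃ u a, x <+: u ∧ u ++ [a] <+: z ∧ P u ∧ ¬ P (u ++ [a]) := by
  induction z using List.reverseRecOn with
  | nil => exact absurd (List.prefix_nil.mp hxz ▸ hx) hz
  | append_singleton z a ih =>
    rcases List.prefix_concat_iff.mp hxz with rfl | hxz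
    · exact absurd hx hz
    by_cases hPz : P z
    · exact ⟨z, a, hxz, List.prefix_refl _, hPz, hz⟩
    · obtain ⟨u, b, hxu, hub, hPu, hPub⟩ := ih hxz hPz
      exact ⟨u, b, hxu, hub.trans (List.prefix_append _ _), hPu, hPub⟩

theorem List.IsPrefix.getElem?_eq {α : Type*} {w z : List α} (h : w <+: z) {i : ℕ}
    (hi : i < w.length) : w[i]? = z[i]? := by
  rw [List.getElem?_eq_getElem hi, h.getElem hi, List.getElem?_eq_getElem]

theorem List.injective_of_isPrefix_set {α : Type*} {p : List α} {b : Fin p.length → α}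
    (hb : ∀ j, b j ≠ p[j]) {w : Fin p.length → List α} (hw : ∀ j, w j <+: p.set j (b j))
    (hlen : ∀ j : Fin p.length, (j : ℕ) < (w j).length) : Injective w := by
  intro j j' hjj
  by_contra hne
  have h1 := (hw j).getElem?_eq (hlen j)
  have h2 := (hw j').getElem?_eq (hjj ▸ hlen j)
  rw [hjj, h2, List.getElem?_set_ne (Fin.val_ne_of_ne (Ne.symm hne)), List.getElem?_set_self j.2,
    List.getElem?_eq_getElem j.2] at h1
  exact hb j (Option.some_injective _ h1).symm

namespace TEVar

open Classical

variable {d k : ℕ}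

def toSum {h : ℕ} : TEVar d k (h + 2) → (Fin d → Fin k) ⊕ (Fin d × TEVar d k (h + 1))
  | .root a => .inl a
  | .child j x => .inr (j, x)

theorem toSum_injective {h : ℕ} : Injective (toSum : TEVar d k (h + 2) → _) := by
  intro v w hvw
  cases v <;> cases w <;> simp_all [toSum]

instance instFinite : (h : ℕ) → Finite (TEVar d k h)
  | 0 => have : IsEmpty (TEVar d k 0) := ⟨fun v => nomatch v⟩; inferInstance
  | 1 => have : Subsingleton (TEVar d k 1) := ⟨fun | .leaf, .leaf => rfl⟩; inferInstance
  | h + 2 => have := instFinite (h + 1); Finite.of_injective _ toSum_injective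

/-- The root-down address of the node whose function table or leaf holds the variable. -/
def node : {h : ℕ} → TEVar d k h → List (Fin d)
  | _, .leaf => []
  | _, .root _ => []
  | _, .child j x => j :: node x

variable (hk : 0 < k)

/-- On input `I`, the variable holding the value of the node at address `y`: the entry of its
function table at the true values of its children, or its leaf. Nodes have addresses of length
at most `n`; longer addresses give junk. -/
def valueVar : {n : ℕ} → (TEVar d k (n + 1) → Fin k) → List (Fin d) → TEVar d k (n + 1)
  | 0, _, _ => .leaf
  | n + 1, I, [] => .root fun j => rootValue d k hk (n + 1) fun x => I (.child j x)
  | _ + 1, I, j :: y => .child j (valueVar (fun x => I (.child j x)) y)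

def nodeValue {n : ℕ} (I : TEVar d k (n + 1) → Fin k) (y : List (Fin d)) : Fin k :=
  I (valueVar hk I y)

variable {n : ℕ}

theorem nodeValue_nil (I : TEVar d k (n + 1) → Fin k) :
    nodeValue hk I [] = rootValue d k hk (n + 1) I := by
  cases n <;> rfl

theorem node_valueVar (I : TEVar d k (n + 1) → Fin k) {y : List (Fin d)} (hy : y.length ≤ n) :
    (valueVar hk I y).node = y := by
  induction n generalizing y with
  | zero => simp_all [valueVar, node]
  | succ n ih =>
    cases y with
    | nil => rfl
    | cons j y => simp only [valueVar, node, ih _ (by simpa using hy)]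

theorem eq_valueVar_of_thriftyVar {I : TEVar d k (n + 1) → Fin k} {v : TEVar d k (n + 1)}
    (hv : ThriftyVar d k hk (n + 1) I v) : v = valueVar hk I v.node := by
  induction n with
  | zero => cases v; rfl
  | succ n ih =>
    cases v with
    | root a => exact congrArg TEVar.root hv
    | child j x => exact congrArg (TEVar.child j) (ih hv)

theorem valueVar_eq_of_length_eq (I J : TEVar d k (n + 1) → Fin k) {y : List (Fin d)}
    (hy : y.length = n) : valueVar hk I y = valueVar hk J y := by
  induction n generalizing y with
  | zero => rfl
  | succ n ih =>
    cases y with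
    | nil => simp at hy
    | cons j y => exact congrArg (TEVar.child j) (ih _ _ (by simpa using hy))

theorem valueVar_eq_iff {I J : TEVar d k (n + 1) → Fin k} {y : List (Fin d)}
    (hy : y.length < n) : valueVar hk I y = valueVar hk J y ↔
      ∀ i, nodeValue hk I (y ++ [i]) = nodeValue hk J (y ++ [i]) := by
  induction n generalizing y with
  | zero => simp at hy
  | succ n ih =>
    cases y with
    | nil =>
      simp only [valueVar, TEVar.root.injEq, funext_iff, List.nil_append]
      exact forall_congr' fun i => by rw [← nodeValue_nil, ← nodeValue_nil]; rfl
    | cons j y =>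
      simp only [valueVar, TEVar.child.injEq, true_and]
      exact ih (by simpa using hy)

theorem nodeValue_congr {I J : TEVar d k (n + 1) → Fin k} {y : List (Fin d)} (hy : y.length ≤ n)
    (hIJ : ∀ v, y <+: v.node → I v = J v) : nodeValue hk I y = nodeValue hk J y := by
  induction n generalizing y with
  | zero =>
    obtain rfl : y = [] := List.eq_nil_of_length_eq_zero (Nat.le_zero.mp hy)
    exact hIJ _ List.nil_prefix
  | succ n ih =>
    cases y with
    | nil => rw [funext fun v => hIJ v List.nil_prefix]
    | cons j y =>
      exact ih (by simpa using hy) fun v hv =>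
        hIJ (.child j v) (List.cons_prefix_cons.mpr ⟨rfl, hv⟩)

theorem nodeValue_update_valueVar (I : TEVar d k (n + 1) → Fin k) {y : List (Fin d)}
    (hy : y.length < n) (b : Fin k) :
    (∀ i, nodeValue hk (update I (valueVar hk I y) b) (y ++ [i]) = nodeValue hk I (y ++ [i])) ∧
      nodeValue hk (update I (valueVar hk I y) b) y = b := by
  have hchild : ∀ i, nodeValue hk (update I (valueVar hk I y) b) (y ++ [i]) =
      nodeValue hk I (y ++ [i]) := fun i =>
    nodeValue_congr hk (by simpa using hy) fun v hv => update_of_ne (by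
      rintro rfl
      have := hv.length_le
      simp [node_valueVar hk I hy.le] at this) _ _
  refine ⟨hchild, ?_⟩
  rw [nodeValue, (valueVar_eq_iff hk hy).mpr hchild, update_self]

theorem valueVar_injective (I J : TEVar d k (n + 1) → Fin k) {y z : List (Fin d)}
    (hy : y.length ≤ n) (hz : z.length ≤ n) (h : valueVar hk I y = valueVar hk J z) :
    y = z := by
  rw [← node_valueVar hk I hy, ← node_valueVar hk J hz, h]

theorem eq_of_forall_eq_or_valueVar {I J : TEVar d k (n + 1) → Fin k}
    (h : ∀ v, I v = J v ∨ ∃ y : List (Fin d), y.length ≤ n ∧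
      (v = valueVar hk I y ∨ v = valueVar hk J y) ∧ nodeValue hk I y = nodeValue hk J y) :
    I = J := by
  have hnode : ∀ y : List (Fin d), y.length ≤ n → valueVar hk I y = valueVar hk J y →
      nodeValue hk I y = nodeValue hk J y := by
    intro y hy hvar
    rcases h (valueVar hk I y) with hv | ⟨z, hz, hzy | hzy, hval⟩
    · rwa [nodeValue, nodeValue, ← hvar]
    · rwa [valueVar_injective hk I I hy hz hzy]
    · rwa [valueVar_injective hk J J hy hz (hvar.symm.trans hzy)]
  have hvar : ∀ y : List (Fin d), y.length ≤ n →
      valueVar hk I y = valueVar hk J y ∧ nodeValue hk I y = nodeValue hk J y := by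
    suffices ∀ m (y : List (Fin d)), y.length + m = n →
        valueVar hk I y = valueVar hk J y ∧ nodeValue hk I y = nodeValue hk J y from
      fun y hy => this _ y (Nat.add_sub_cancel' hy)
    intro m
    induction m with
    | zero =>
      intro y hy
      have hvar := valueVar_eq_of_length_eq hk I J hy
      exact ⟨hvar, hnode y hy.le hvar⟩
    | succ m ih =>
      intro y hy
      have hvar := (valueVar_eq_iff hk (by omega)).mpr fun i => (ih (y ++ [i]) (by simp; omega)).2
      exact ⟨hvar, hnode y (by omega) hvar⟩
  funext v
  rcases h v with hv | ⟨y, hy, rfl | rfl, hval⟩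
  · exact hv
  · rwa [nodeValue, nodeValue, ← (hvar y hy).1] at hval
  · rwa [nodeValue, nodeValue, (hvar y hy).1] at hval

end TEVar

namespace DBP

open TEVar Classical

section Run

variable {V : Type} {k : ℕ} {R : Type} (B : DBP V k R)

def run (I : V → Fin k) (t : ℕ) : B.Q := (B.step I)^[t] B.start

theorem run_add (I : V → Fin k) (s t : ℕ) : B.run I (s + t) = (B.step I)^[t] (B.run I s) := by
  rw [run, add_comm, iterate_add_apply]; rfl

variable {B}

theorem iterate_step_eq_of_agree {I J : V → Fin k} {q : B.Q} {s : ℕ}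
    (h : ∀ r < s, ∀ v, B.label ((B.step I)^[r] q) = .inl v → I v = J v) :
    (B.step I)^[s] q = (B.step J)^[s] q := by
  induction s with
  | zero => rfl
  | succ s ih =>
    rw [iterate_succ_apply', iterate_succ_apply', ← ih fun r hr => h r (by omega)]
    cases hq : B.label ((B.step I)^[s] q) with
    | inl v => simp [step, hq, h s (by omega) v hq]
    | inr r => simp [step, hq]

theorem run_eq_of_agree {I J : V → Fin k} {s : ℕ}
    (h : ∀ r < s, ∀ v, B.label (B.run I r) = .inl v → I v = J v) : B.run I s = B.run J s :=
  iterate_step_eq_of_agree h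

theorem run_eq_of_halted {I : V → Fin k} {T s : ℕ} {r : R} (hT : B.label (B.run I T) = .inr r)
    (hs : T ≤ s) : B.run I s = B.run I T := by
  obtain ⟨m, rfl⟩ := Nat.exists_eq_add_of_le hs
  rw [run_add]
  induction m with
  | zero => rfl
  | succ m ih => rw [iterate_succ_apply', ih (by omega)]; simp [step, hT]

theorem Computes.eq_of_run_eq {f : (V → Fin k) → R} (hB : B.Computes f) {I J : V → Fin k}
    (h : ∀ s, B.run I s = B.run J s) : f I = f J := by
  obtain ⟨s, hs : B.label (B.run I s) = _⟩ := hB I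
  obtain ⟨t, ht : B.label (B.run J t) = _⟩ := hB J
  have hI : B.run I (s + t) = B.run I s := run_eq_of_halted hs (by omega)
  have hJ : B.run J (s + t) = B.run J t := run_eq_of_halted ht (by omega)
  refine Sum.inr_injective (hs.symm.trans ?_)
  rw [← ht, ← hJ, ← h, hI]

end Run

variable {k : ℕ} {R : Type}

def QueriesNode {d h : ℕ} (B : DBP (TEVar d k h) k R) (q : B.Q) (y : List (Fin d)) : Prop :=
  ∃ v, B.label q = .inl v ∧ v.node = y

theorem QueriesNode.eq {d h : ℕ} {B : DBP (TEVar d k h) k R} {q : B.Q} {y z : List (Fin d)}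
    (hy : B.QueriesNode q y) (hz : B.QueriesNode q z) : y = z := by
  obtain ⟨v, hv, rfl⟩ := hy
  obtain ⟨w, hw, rfl⟩ := hz
  rw [Sum.inl_injective (hv.symm.trans hw)]

section Thrifty

variable {d n : ℕ} (hk : 0 < k) {B : DBP (TEVar d k (n + 1)) k R}

theorem eq_valueVar_of_label_run (hthr : DBPThrifty d k (n + 1) hk B)
    {I : TEVar d k (n + 1) → Fin k} {t : ℕ} {v : TEVar d k (n + 1)}
    (hv : B.label (B.run I t) = .inl v) : v = valueVar hk I v.node :=
  eq_valueVar_of_thriftyVar hk (hthr I t v hv)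

/-- A thrifty query reveals the values of the children of the queried node. -/
theorem nodeValue_concat_eq_of_run_eq (hthr : DBPThrifty d k (n + 1) hk B)
    {I J : TEVar d k (n + 1) → Fin k} {σ τ : ℕ} {y : List (Fin d)}
    (hrun : B.run I σ = B.run J τ) (hq : B.QueriesNode (B.run I σ) y) (hy : y.length < n)
    (i : Fin d) : nodeValue hk I (y ++ [i]) = nodeValue hk J (y ++ [i]) := by
  obtain ⟨v, hv, rfl⟩ := hq
  have hI := eq_valueVar_of_label_run hk hthr hv
  have hJ := eq_valueVar_of_label_run hk hthr (hrun ▸ hv)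
  exact (valueVar_eq_iff hk hy).mp (hI.symm.trans hJ) i

theorem run_update_valueVar_eq {I : TEVar d k (n + 1) → Fin k} {y : List (Fin d)}
    (hy : y.length ≤ n) (b : Fin k) {s : ℕ} (hs : ∀ r < s, ¬ B.QueriesNode (B.run I r) y) :
    B.run I s = B.run (update I (valueVar hk I y) b) s :=
  run_eq_of_agree fun r hr v hv => (update_of_ne (fun hvy =>
    hs r hr ⟨v, hv, by rw [hvy, node_valueVar hk I hy]⟩) _ _).symm

theorem exists_queriesNode_concat_lt (hk2 : 2 ≤ k) (hthr : DBPThrifty d k (n + 1) hk B)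
    {I : TEVar d k (n + 1) → Fin k} {y : List (Fin d)} {i : Fin d} {τ : ℕ}
    (hy : (y ++ [i]).length < n) (hτ : B.QueriesNode (B.run I τ) y) :
    ∃ σ < τ, B.QueriesNode (B.run I σ) (y ++ [i]) := by
  by_contra! hnot
  have : Nontrivial (Fin k) := Fin.nontrivial_iff_two_le.mpr hk2
  obtain ⟨b, hb⟩ := exists_ne (I (valueVar hk I (y ++ [i])))
  have hrun := run_update_valueVar_eq hk hy.le b hnot
  have hval := nodeValue_concat_eq_of_run_eq hk hthr hrun hτ (by simp at hy ⊢; omega) i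
  exact hb (hval.trans (nodeValue_update_valueVar hk I hy b).2).symm

end Thrifty

section Root

variable {d n : ℕ} (hk : 0 < k) {B : DBP (TEVar d k (n + 1)) k Bool}

/-- Otherwise overwriting the entry holding the root's value would flip the output without
changing the run. -/
theorem exists_queriesNode_nil (hk2 : 2 ≤ k) (hB : B.Computes (BTfun d k hk (n + 1)))
    (hn : 0 < n) (I : TEVar d k (n + 1) → Fin k) : ∃ t, B.QueriesNode (B.run I t) [] := by
  by_contra! hnot
  let b : Fin k := if rootValue d k hk (n + 1) I = ⟨0, hk⟩ then ⟨1, hk2⟩ else ⟨0, hk⟩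
  have hroot := (nodeValue_update_valueVar hk I (y := []) hn b).2
  have hout := hB.eq_of_run_eq fun s =>
    run_update_valueVar_eq hk (Nat.zero_le n) b fun r _ => hnot r
  rw [nodeValue_nil] at hroot
  unfold BTfun at hout
  rw [hroot] at hout
  by_cases h0 : rootValue d k hk (n + 1) I = ⟨0, hk⟩ <;> simp [b, h0, Fin.ext_iff] at hout

end Root

section EstablishTime

variable {d h : ℕ} (B : DBP (TEVar d k h) k R) (I : TEVar d k h → Fin k)

noncomputable def lastQueryBefore (y : List (Fin d)) (T : ℕ) : ℕ :=
  Nat.findGreatest (fun σ => σ < T ∧ B.QueriesNode (B.run I σ) y) T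

/-- Establishment times, starting from a time `T` at which the root is queried: a node is
established at its last query before its parent is established. -/
noncomputable def establishTime (T : ℕ) : List (Fin d) → ℕ
  | [] => T
  | a :: y => B.lastQueryBefore I (a :: y) (establishTime T (a :: y).dropLast)
termination_by y => y.length
decreasing_by simp

variable {B I}

theorem establishTime_concat (T : ℕ) (y : List (Fin d)) (i : Fin d) :
    B.establishTime I T (y ++ [i]) = B.lastQueryBefore I (y ++ [i]) (B.establishTime I T y) := by
  obtain ⟨a, z, hyi⟩ : ∃ a z, y ++ [i] = a :: z := List.exists_cons_of_ne_nil (by simp)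
  rw [hyi, establishTime, ← hyi, List.dropLast_concat]

theorem le_establishTime_concat {T σ : ℕ} {y : List (Fin d)} {i : Fin d}
    (hσ : B.QueriesNode (B.run I σ) (y ++ [i])) (hσy : σ < B.establishTime I T y) :
    σ ≤ B.establishTime I T (y ++ [i]) := by
  rw [establishTime_concat]
  exact Nat.le_findGreatest hσy.le ⟨hσy, hσ⟩

theorem establishTime_concat_spec {T : ℕ} {y : List (Fin d)} {i : Fin d}
    (h : ∃ σ < B.establishTime I T y, B.QueriesNode (B.run I σ) (y ++ [i])) :
    B.establishTime I T (y ++ [i]) < B.establishTime I T y ∧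
      B.QueriesNode (B.run I (B.establishTime I T (y ++ [i]))) (y ++ [i]) := by
  obtain ⟨σ, hσ, hq⟩ := h
  rw [establishTime_concat]
  exact Nat.findGreatest_spec (P := fun σ => σ < _ ∧ _) hσ.le ⟨hσ, hq⟩

end EstablishTime

section ThriftyEstablishTime

variable {d n : ℕ} (hk : 0 < k) (hk2 : 2 ≤ k) {B : DBP (TEVar d k (n + 1)) k R}
  (hthr : DBPThrifty d k (n + 1) hk B) {I : TEVar d k (n + 1) → Fin k} {T : ℕ}
  (hT : B.QueriesNode (B.run I T) [])

include hk2 hthr hT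

theorem queriesNode_establishTime {y : List (Fin d)} (hy : y.length < n) :
    B.QueriesNode (B.run I (B.establishTime I T y)) y := by
  induction y using List.reverseRecOn with
  | nil => rwa [establishTime]
  | append_singleton y i ih =>
    have ih := ih (by simp at hy; omega)
    exact (establishTime_concat_spec (exists_queriesNode_concat_lt hk hk2 hthr hy ih)).2

theorem establishTime_concat_lt {y : List (Fin d)} {i : Fin d} (hy : (y ++ [i]).length < n) :
    B.establishTime I T (y ++ [i]) < B.establishTime I T y :=
  (establishTime_concat_spec (exists_queriesNode_concat_lt hk hk2 hthr hy
    (queriesNode_establishTime hk hk2 hthr hT (by simp at hy; omega)))).1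

theorem establishTime_le_of_prefix {x y : List (Fin d)} (hxy : x <+: y) (hy : y.length < n) :
    B.establishTime I T y ≤ B.establishTime I T x := by
  induction y using List.reverseRecOn with
  | nil => rw [List.prefix_nil.mp hxy]
  | append_singleton y i ih =>
    rcases List.prefix_concat_iff.mp hxy with rfl | hxy
    · exact le_rfl
    · exact (establishTime_concat_lt hk hk2 hthr hT hy).le.trans (ih hxy (by simp at hy; omega))

theorem eq_of_establishTime_eq {y z : List (Fin d)} (hy : y.length < n) (hz : z.length < n)
    (h : B.establishTime I T y = B.establishTime I T z) : y = z :=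
  (queriesNode_establishTime hk hk2 hthr hT hy).eq
    (h ▸ queriesNode_establishTime hk hk2 hthr hT hz)

theorem exists_forall_establishTime_lt (hd : 0 < d) {L : ℕ} (hL : L < n) :
    ∃ p : List (Fin d), p.length = L ∧ ∀ z : List (Fin d), z.length = L → z ≠ p →
      B.establishTime I T z < B.establishTime I T p := by
  have : Nonempty (List.Vector (Fin d) L) := ⟨.replicate L ⟨0, hd⟩⟩
  obtain ⟨⟨p, hp⟩, hmax⟩ :=
    Finite.exists_max fun v : List.Vector (Fin d) L => B.establishTime I T v.toList
  refine ⟨p, hp, fun z hz hzp => (hmax ⟨z, hz⟩).lt_of_ne fun h => hzp ?_⟩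
  exact eq_of_establishTime_eq hk hk2 hthr hT (by omega) (by omega) h

/-- Walk down from the ancestor `p.take j` of `p`, which is not established before `p`, towards
`p.set j b`, which is. -/
theorem exists_pin {p : List (Fin d)} (hp : p.length < n)
    (hmax : ∀ z : List (Fin d), z.length = p.length → z ≠ p →
      B.establishTime I T z < B.establishTime I T p)
    {j : ℕ} (hj : j < p.length) {b : Fin d} (hb : b ≠ p[j]) :
    ∃ u a, j ≤ u.length ∧ u ++ [a] <+: p.set j b ∧
      B.establishTime I T p ≤ B.establishTime I T u ∧
      B.establishTime I T (u ++ [a]) < B.establishTime I T p := by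
  have hsib : p.set j b ≠ p := fun h => hb <| Option.some_injective _ <| by
    rw [← List.getElem?_set_self (a := b) hj, h, List.getElem?_eq_getElem hj]
  have htake : p.take j <+: p.set j b := by
    rw [← List.take_set_of_le (a := b) le_rfl]
    exact List.take_prefix _ _
  obtain ⟨u, a, hju, hua, hu, hua'⟩ :=
    htake.exists_crossing (P := fun w => B.establishTime I T p ≤ B.establishTime I T w)
      (establishTime_le_of_prefix hk hk2 hthr hT (List.take_prefix _ _) hp)
      (not_le.mpr (hmax _ (by simp) hsib))
  refine ⟨u, a, ?_, hua, hu, not_le.mp hua'⟩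
  simpa [hj.le] using hju.length_le

end ThriftyEstablishTime

section Critical

variable {d n : ℕ} (B : DBP (TEVar d k (n + 1)) k R)
  (I : TEVar d k (n + 1) → Fin k)

/-- A critical configuration at depth `L` on input `I`. At `time` the program queries `node`, a
node at depth `L`. Each of the `L` pinned nodes `pinParent j ++ [pinDir j]` is not queried from
`time` until its parent is queried, `reveal j` steps later. -/
structure Critical (L : ℕ) where
  lt : L < n
  node : List (Fin d)
  length_node : node.length = L
  time : ℕ
  queriesNode_time : B.QueriesNode (B.run I time) node
  pinParent : Fin L → List (Fin d)
  pinDir : Fin L → Fin d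
  length_pinParent_lt : ∀ j, (pinParent j).length < L
  pin_injective : Injective fun j => pinParent j ++ [pinDir j]
  reveal : Fin L → ℕ
  queriesNode_reveal : ∀ j, B.QueriesNode (B.run I (time + reveal j)) (pinParent j)
  not_queriesNode_pin : ∀ j, ∀ s < reveal j,
    ¬ B.QueriesNode (B.run I (time + s)) (pinParent j ++ [pinDir j])

namespace Critical

variable {B I} {L : ℕ} (c : B.Critical I L)

def pinnedNode : Fin L ⊕ Fin d → List (Fin d) :=
  Sum.elim (fun j => c.pinParent j ++ [c.pinDir j]) fun i => c.node ++ [i]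

theorem length_pinnedNode_le (x : Fin L ⊕ Fin d) : (c.pinnedNode x).length ≤ n := by
  have := c.lt
  rcases x with j | i
  · simpa [pinnedNode] using (c.length_pinParent_lt j).trans this
  · simpa [pinnedNode, c.length_node] using this

theorem pinnedNode_injective : Injective c.pinnedNode := by
  have hlen := c.length_pinParent_lt
  rintro (j | i) (j' | i') h <;> simp only [pinnedNode, Sum.elim_inl, Sum.elim_inr] at h
  · exact congrArg _ (c.pin_injective h)
  · have := congrArg List.length h
    simp [c.length_node] at this
    exact absurd this (hlen j).ne
  · have := congrArg List.length h
    simp [c.length_node] at this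
    exact absurd this.symm (hlen j').ne
  · simp_all

variable (hk : 0 < k)

def pinnedVar (x : Fin L ⊕ Fin d) : TEVar d k (n + 1) := valueVar hk I (c.pinnedNode x)

theorem pinnedVar_injective : Injective (c.pinnedVar hk) := fun x y h =>
  c.pinnedNode_injective
    (valueVar_injective hk I I (c.length_pinnedNode_le x) (c.length_pinnedNode_le y) h)

noncomputable def overwrite (δ : Fin L ⊕ Fin d → Fin k) : TEVar d k (n + 1) → Fin k :=
  extend (c.pinnedVar hk) δ I

theorem overwrite_pinnedVar (δ : Fin L ⊕ Fin d → Fin k) (x : Fin L ⊕ Fin d) :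
    c.overwrite hk δ (c.pinnedVar hk x) = δ x :=
  (c.pinnedVar_injective hk).extend_apply _ _ _

theorem overwrite_of_forall_ne (δ : Fin L ⊕ Fin d → Fin k) {v : TEVar d k (n + 1)}
    (hv : ∀ x, c.pinnedVar hk x ≠ v) : c.overwrite hk δ v = I v :=
  extend_apply' _ _ _ fun ⟨x, hx⟩ => hv x hx

theorem reveal_lt {j : Fin L} {s : ℕ}
    (hq : B.QueriesNode (B.run I (c.time + s)) (c.pinParent j ++ [c.pinDir j])) :
    c.reveal j < s := by
  by_contra! hs
  rcases hs.lt_or_eq with hs | rfl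
  · exact c.not_queriesNode_pin j s hs hq
  · simpa using (c.queriesNode_reveal j).eq hq

variable {hk} (hthr : DBPThrifty d k (n + 1) hk B) {I' : TEVar d k (n + 1) → Fin k}
include hthr

theorem nodeValue_child_eq {σ' : ℕ} (hrun : B.run I c.time = B.run I' σ') (i : Fin d) :
    nodeValue hk I (c.node ++ [i]) = nodeValue hk I' (c.node ++ [i]) :=
  nodeValue_concat_eq_of_run_eq hk hthr hrun c.queriesNode_time
    (by rw [c.length_node]; exact c.lt) i

theorem nodeValue_pin_eq {σ' : ℕ} (j : Fin L)
    (hrun : B.run I (c.time + c.reveal j) = B.run I' σ') :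
    nodeValue hk I (c.pinParent j ++ [c.pinDir j]) =
      nodeValue hk I' (c.pinParent j ++ [c.pinDir j]) :=
  nodeValue_concat_eq_of_run_eq hk hthr hrun (c.queriesNode_reveal j)
    ((c.length_pinParent_lt j).trans c.lt) _

theorem nodeValue_pinnedNode_eq {t' : ℕ} (hrun : ∀ s, B.run I (c.time + s) = B.run I' (t' + s))
    (x : Fin L ⊕ Fin d) : nodeValue hk I (c.pinnedNode x) = nodeValue hk I' (c.pinnedNode x) := by
  rcases x with j | i
  · exact c.nodeValue_pin_eq hthr j (hrun _)
  · exact c.nodeValue_child_eq hthr (hrun 0) i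

/-- While two runs agree, they read the same values from the pinned entries: the children of
`node` are revealed at `time`, and a pinned node can only be queried after its parent
revealed it. -/
theorem apply_pinnedVar_eq {t' s : ℕ}
    (hrun : ∀ r ≤ s, B.run I (c.time + r) = B.run I' (t' + r))
    {x : Fin L ⊕ Fin d} (hx : B.label (B.run I (c.time + s)) = .inl (c.pinnedVar hk x)) :
    I (c.pinnedVar hk x) = I' (c.pinnedVar hk x) := by
  have hnode := node_valueVar hk I (c.length_pinnedNode_le x)
  have hvar := eq_valueVar_of_label_run hk hthr (hrun s le_rfl ▸ hx)
  rw [pinnedVar, hnode] at hvar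
  change nodeValue hk I _ = I' (valueVar hk I _)
  rw [hvar]
  rcases x with j | i
  · exact c.nodeValue_pin_eq hthr j (hrun _ (c.reveal_lt ⟨_, hx, hnode⟩).le)
  · exact c.nodeValue_child_eq hthr (hrun 0 (Nat.zero_le _)) i

theorem eq_of_overwrite_eq (c' : B.Critical I' L)
    {δ δ' : Fin L ⊕ Fin d → Fin k} (hrun : B.run I c.time = B.run I' c'.time)
    (hw : c.overwrite hk δ = c'.overwrite hk δ') : I = I' := by
  have hoff : ∀ v, (∀ x, c.pinnedVar hk x ≠ v) → (∀ x, c'.pinnedVar hk x ≠ v) →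
      I v = I' v := fun v h h' => by
    rw [← c.overwrite_of_forall_ne hk δ h, hw, c'.overwrite_of_forall_ne hk δ' h']
  have hfut : ∀ s, B.run I (c.time + s) = B.run I' (c'.time + s) := by
    intro s
    induction s using Nat.strong_induction_on with
    | _ s ih =>
      rw [run_add, run_add, hrun]
      refine iterate_step_eq_of_agree fun r hr v hv => ?_
      rw [← hrun, ← run_add] at hv
      have hle : ∀ r' ≤ r, B.run I (c.time + r') = B.run I' (c'.time + r') :=
        fun r' hr' => ih r' (by omega)
      by_cases hx : ∃ x, c.pinnedVar hk x = v
      · obtain ⟨x, rfl⟩ := hx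
        exact c.apply_pinnedVar_eq hthr hle hv
      by_cases hx' : ∃ x, c'.pinnedVar hk x = v
      · obtain ⟨x, rfl⟩ := hx'
        exact (c'.apply_pinnedVar_eq hthr (fun r' hr' => (hle r' hr').symm)
          (hle r le_rfl ▸ hv)).symm
      exact hoff v (not_exists.mp hx) (not_exists.mp hx')
  refine eq_of_forall_eq_or_valueVar hk fun v => ?_
  by_cases hx : ∃ x, c.pinnedVar hk x = v
  · obtain ⟨x, rfl⟩ := hx
    exact .inr ⟨_, c.length_pinnedNode_le x, .inl rfl, c.nodeValue_pinnedNode_eq hthr hfut x⟩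
  by_cases hx' : ∃ x, c'.pinnedVar hk x = v
  · obtain ⟨x, rfl⟩ := hx'
    exact .inr ⟨_, c'.length_pinnedNode_le x, .inr rfl,
      (c'.nodeValue_pinnedNode_eq hthr (fun s => (hfut s).symm) x).symm⟩
  exact .inl (hoff v (not_exists.mp hx) (not_exists.mp hx'))

end Critical

end Critical

section Count

variable {d : ℕ}

noncomputable def statesAtDepth {h : ℕ} (B : DBP (TEVar d k h) k R) (L : ℕ) :
    Finset B.Q :=
  let _ : Fintype B.Q := B.fin
  Finset.univ.filter fun q => ∃ y : List (Fin d), y.length = L ∧ B.QueriesNode q y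

theorem mem_statesAtDepth {h : ℕ} {B : DBP (TEVar d k h) k R} {L : ℕ} {q : B.Q} :
    q ∈ B.statesAtDepth L ↔ ∃ y : List (Fin d), y.length = L ∧ B.QueriesNode q y := by
  simp [statesAtDepth]

variable {n : ℕ} (hk : 0 < k) (hk2 : 2 ≤ k) (hd : 2 ≤ d) {B : DBP (TEVar d k (n + 1)) k Bool}
  (hB : B.Computes (BTfun d k hk (n + 1))) (hthr : DBPThrifty d k (n + 1) hk B)
include hk2 hd hB hthr

/-- The critical node is a depth-`L` node established last. -/
theorem nonempty_critical (I : TEVar d k (n + 1) → Fin k) {L : ℕ} (hL : L < n) :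
    Nonempty (B.Critical I L) := by
  obtain ⟨T, hT⟩ := exists_queriesNode_nil hk hk2 hB (by omega) I
  obtain ⟨p, rfl, hmax⟩ := exists_forall_establishTime_lt hk hk2 hthr hT (by omega) hL
  have : Nontrivial (Fin d) := Fin.nontrivial_iff_two_le.mpr hd
  choose b hb using fun j : Fin p.length => exists_ne p[j]
  choose u a hju hua hu hua' using fun j : Fin p.length =>
    exists_pin hk hk2 hthr hT hL hmax j.2 (hb j)
  have hlen : ∀ j, (u j).length < p.length := fun j => by
    simpa using (hua j).length_le
  exact ⟨{
    lt := hL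
    node := p
    length_node := rfl
    time := B.establishTime I T p
    queriesNode_time := queriesNode_establishTime hk hk2 hthr hT hL
    pinParent := u
    pinDir := a
    length_pinParent_lt := hlen
    pin_injective := List.injective_of_isPrefix_set hb hua fun j => by simpa using hju j
    reveal := fun j => B.establishTime I T (u j) - B.establishTime I T p
    queriesNode_reveal := fun j => by
      rw [Nat.add_sub_cancel' (hu j)]
      exact queriesNode_establishTime hk hk2 hthr hT ((hlen j).trans hL)
    not_queriesNode_pin := fun j s hs hq =>
      (hua' j).not_ge ((Nat.le_add_right _ s).trans (le_establishTime_concat hq (by omega))) }⟩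

theorem pow_le_card_statesAtDepth {L : ℕ} (hL : L < n) :
    k ^ (L + d) ≤ (B.statesAtDepth L).card := by
  let _ : Fintype B.Q := B.fin
  let crit (I : TEVar d k (n + 1) → Fin k) : B.Critical I L :=
    (nonempty_critical hk hk2 hd hB hthr I hL).some
  let F (Iδ : (TEVar d k (n + 1) → Fin k) × (Fin L ⊕ Fin d → Fin k)) :
      B.statesAtDepth L × (TEVar d k (n + 1) → Fin k) :=
    (⟨B.run Iδ.1 (crit Iδ.1).time,
      mem_statesAtDepth.mpr ⟨_, (crit Iδ.1).length_node, (crit Iδ.1).queriesNode_time⟩⟩,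
      (crit Iδ.1).overwrite hk Iδ.2)
  have hF : Injective F := by
    rintro ⟨I, δ⟩ ⟨I', δ'⟩ h
    simp only [F, Prod.mk.injEq, Subtype.mk.injEq] at h
    obtain rfl := (crit I).eq_of_overwrite_eq hthr (crit I') h.1 h.2
    have hδ : δ = δ' := funext fun x => by
      simpa only [Critical.overwrite_pinnedVar] using congrFun h.2 ((crit I).pinnedVar hk x)
    rw [hδ]
  have hcard := Nat.card_le_card_of_injective F hF
  have : Nonempty (Fin k) := ⟨⟨0, hk⟩⟩
  have hpos : 0 < Nat.card (TEVar d k (n + 1) → Fin k) := Nat.card_pos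
  simp only [Nat.card_prod, Nat.card_fun, Nat.card_sum, Nat.card_fin, Nat.card_eq_finsetCard]
    at hcard hpos
  exact Nat.le_of_mul_le_mul_left (by linarith) hpos

theorem sum_pow_le_size : ∑ L ∈ Finset.range n, k ^ (L + d) ≤ B.size := by
  let _ : Fintype B.Q := B.fin
  calc ∑ L ∈ Finset.range n, k ^ (L + d)
      ≤ ∑ L ∈ Finset.range n, (B.statesAtDepth L).card :=
        Finset.sum_le_sum fun L hL =>
          pow_le_card_statesAtDepth hk hk2 hd hB hthr (Finset.mem_range.mp hL)
    _ = ((Finset.range n).biUnion B.statesAtDepth).card := by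
        refine (Finset.card_biUnion fun L _ L' _ hLL' => Finset.disjoint_left.mpr ?_).symm
        intro q hq hq'
        obtain ⟨y, rfl, hy⟩ := mem_statesAtDepth.mp hq
        obtain ⟨y', rfl, hy'⟩ := mem_statesAtDepth.mp hq'
        exact hLL' (congrArg List.length (hy.eq hy'))
    _ ≤ B.size := Finset.card_le_univ _

end Count

end DBP

/-- For all `h, k ≥ 2`, every deterministic thrifty `k`-way branching program solving
`BT_2^h(k)` has at least `k^h` states; moreover it has at least `∑_{l=2}^{h} k^l`
states. -/
theorem det_thrifty_lower (h k : ℕ) (hh : 2 ≤ h) (hk : 2 ≤ k) :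
    ∀ B : DBP (TEVar 2 k h) k Bool,
      B.Computes (BTfun 2 k (by omega) h) →
      DBPThrifty 2 k h (by omega) B →
      k ^ h ≤ B.size ∧ ∑ l ∈ Finset.Icc 2 h, k ^ l ≤ B.size := by
  intro B hB hthr
  obtain ⟨n, rfl⟩ : ∃ n, h = n + 1 := ⟨h - 1, by omega⟩
  have hsum : ∑ l ∈ Finset.Icc 2 (n + 1), k ^ l ≤ B.size := by
    have := DBP.sum_pow_le_size (by omega) hk le_rfl hB hthr
    rwa [← Finset.Ico_add_one_right_eq_Icc, Finset.sum_Ico_eq_sum_range,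
      show n + 1 + 1 - 2 = n by omega, Finset.sum_congr rfl fun L _ => by rw [add_comm]]
  exact ⟨(Finset.single_le_sum (fun _ _ => Nat.zero_le _)
    (Finset.mem_Icc.mpr ⟨hh, le_rfl⟩)).trans hsum, hsum⟩
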